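/- Let ν ≥ 1 be an integer, let s = (s_1,…,s_ν) ∈ (0,∞)^ν, and let M be a real number with M ≥ ν·(max_{1≤θ≤ν} s_θ + 1). Then for every k = (k_1,…,k_ν) ∈ ℤ^ν one has 2^{-(k_1 s_1 + ⋯ + k_ν s_ν)} · 2^{-M · max_{1≤θ≤ν} max(-k_θ, 0)} ≤ ∏_{θ=1}^{ν} 2^{-|k_θ| · min(1, s_θ)}. -/

import Mathlib

/-! Per coordinate, `|k|·min(1,s) - k·s` is `≤ 0` when `k ≥ 0` and at most
`(-k)·(1 + max s) ≤ (max_θ max(-k_θ,0))·(1 + max s)` when `k < 0`; summing over the `ν`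
coordinates gives a loss of at most `ν·(1 + max s)·max_θ max(-k_θ,0)`, which the factor `M`
absorbs. -/

open Finset

lemma abs_mul_min_one_sub_mul_le {x t K S : ℝ} (hK : max (-x) 0 ≤ K) (ht : t ≤ S)
    (hS : 0 ≤ S + 1) : |x| * min 1 t - x * t ≤ K * (S + 1) := by
  have hK₀ : 0 ≤ K := (le_max_right _ _).trans hK
  rcases le_or_gt 0 x with hx | hx
  · calc |x| * min 1 t - x * t = x * (min 1 t - t) := by rw [abs_of_nonneg hx]; ring
      _ ≤ 0 := mul_nonpos_of_nonneg_of_nonpos hx (by linarith [min_le_right 1 t])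
      _ ≤ K * (S + 1) := mul_nonneg hK₀ hS
  · calc |x| * min 1 t - x * t = -x * (min 1 t + t) := by rw [abs_of_neg hx]; ring
      _ ≤ -x * (S + 1) :=
          mul_le_mul_of_nonneg_left (by linarith [min_le_left 1 t]) (by linarith)
      _ ≤ K * (S + 1) := by gcongr; exact (le_max_left _ _).trans hK

lemma sum_abs_mul_min_one_le {ι : Type*} [Fintype ι] (x t : ι → ℝ) {K S M : ℝ}
    (hK : ∀ i, max (-x i) 0 ≤ K) (hK₀ : 0 ≤ K) (ht : ∀ i, t i ≤ S) (hS : 0 ≤ S + 1)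
    (hM : Fintype.card ι * (S + 1) ≤ M) :
    ∑ i, |x i| * min 1 (t i) ≤ ∑ i, x i * t i + M * K := by
  have hterms : ∑ i, (|x i| * min 1 (t i) - x i * t i) ≤ Fintype.card ι * (K * (S + 1)) := by
    rw [← card_univ, ← nsmul_eq_mul, ← sum_const]
    exact sum_le_sum fun i _ => abs_mul_min_one_sub_mul_le (hK i) (ht i) hS
  have hMK : Fintype.card ι * (K * (S + 1)) ≤ M * K := by
    linarith [mul_le_mul_of_nonneg_right hM hK₀]
  rw [sum_sub_distrib] at hterms
  linarith

theorem stmt_0_general (ν : ℕ) (s : Fin ν → ℝ) (hs : ∀ θ, 0 < s θ)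
    (M : ℝ) (hM : (ν : ℝ) * ((⨆ θ, s θ) + 1) ≤ M) (k : Fin ν → ℤ) :
    (2 : ℝ) ^ (-(∑ θ, (k θ : ℝ) * s θ)) *
        (2 : ℝ) ^ (-(M * ⨆ θ, max (-(k θ : ℝ)) 0)) ≤
      ∏ θ, (2 : ℝ) ^ (-(|(k θ : ℝ)| * min 1 (s θ))) := by
  have hexp := sum_abs_mul_min_one_le (fun θ => (k θ : ℝ)) s
    (le_ciSup (Set.finite_range _).bddAbove) (Real.iSup_nonneg fun θ => le_max_right _ _)
    (le_ciSup (Set.finite_range _).bddAbove) (by linarith [Real.iSup_nonneg fun θ => (hs θ).le])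
    (by simpa using hM)
  rw [← Real.rpow_add two_pos, ← Real.rpow_sum_of_pos two_pos]
  apply Real.rpow_le_rpow_of_exponent_le one_le_two
  rw [sum_neg_distrib]
  linarith

/-- Let `ν ≥ 1`, let `s ∈ (0,∞)^ν`, and let `M` be a real number with
`M ≥ ν·(max_θ s_θ + 1)`.  Then for every `k ∈ ℤ^ν`,
`2^{-(k·s)} · 2^{-M·max_θ max(-k_θ,0)} ≤ ∏_θ 2^{-|k_θ|·min(1,s_θ)}`. -/
theorem stmt_0 (ν : ℕ) (hν : 1 ≤ ν) (s : Fin ν → ℝ) (hs : ∀ θ, 0 < s θ)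
    (M : ℝ) (hM : (ν : ℝ) * ((⨆ θ, s θ) + 1) ≤ M) (k : Fin ν → ℤ) :
    (2 : ℝ) ^ (-(∑ θ, (k θ : ℝ) * s θ)) *
        (2 : ℝ) ^ (-(M * ⨆ θ, max (-(k θ : ℝ)) 0)) ≤
      ∏ θ, (2 : ℝ) ^ (-(|(k θ : ℝ)| * min 1 (s θ))) :=
  stmt_0_general ν s hs M hM k
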